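/- arXiv:1807.07264 — 6 statements merged into one kernel-verified Lean document; each statement's English description precedes it below -/
import Mathlib

section
/- Let A ∈ ℝ^{n×n} be symmetric with smallest eigenvalue λ₁ satisfying λ₁ < min{0, λ₂} (where λ₂ is the second smallest eigenvalue), let v₁ be an eigenvector of A for λ₁ scaled so that ‖v₁‖² = δ₁², let μ₀ ∈ (max{0,−λ₂}, −λ₁), and set a = −(A + μ₀ I) v₁ and μ* = −2λ₁ − μ₀. Then (A + μ* I)(−v₁) + a = 0, μ* > −λ₁, and A + μ* I is positive definite; consequently x* = −v₁ is the unique global minimizer of minimizing (1/2)xᵀAx + aᵀx subject to ‖x‖² ≤ δ₁². -/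
open Matrix

theorem stmt_2 {n : ℕ}
    (A : Matrix (Fin n) (Fin n) ℝ) (hA : A.IsSymm)
    (lam1 lam2 : ℝ) (hlam12 : lam1 ≤ lam2)
    (hlam1 : lam1 < min 0 lam2)
    (hRayleigh : ∀ x : Fin n → ℝ, lam1 * (x ⬝ᵥ x) ≤ x ⬝ᵥ A.mulVec x)
    (δ₁ : ℝ) (hδ₁ : 0 < δ₁)
    (v₁ : Fin n → ℝ) (hv₁ : A.mulVec v₁ = lam1 • v₁) (hv₁norm : v₁ ⬝ᵥ v₁ = δ₁ ^ 2)
    (μ₀ : ℝ) (hμ₀ : μ₀ ∈ Set.Ioo (max 0 (-lam2)) (-lam1))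
    (a : Fin n → ℝ) (ha : a = -(A + μ₀ • (1 : Matrix (Fin n) (Fin n) ℝ)).mulVec v₁)
    (μstar : ℝ) (hμstar : μstar = -2 * lam1 - μ₀) :
    (A + μstar • (1 : Matrix (Fin n) (Fin n) ℝ)).mulVec (-v₁) + a = 0 ∧
    μstar > -lam1 ∧
    (A + μstar • (1 : Matrix (Fin n) (Fin n) ℝ)).PosDef ∧
    (∀ x : Fin n → ℝ, x ⬝ᵥ x ≤ δ₁ ^ 2 →
      (1 / 2) * ((-v₁) ⬝ᵥ A.mulVec (-v₁)) + a ⬝ᵥ (-v₁) ≤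
        (1 / 2) * (x ⬝ᵥ A.mulVec x) + a ⬝ᵥ x) ∧
    (∀ x : Fin n → ℝ, x ⬝ᵥ x ≤ δ₁ ^ 2 → x ≠ -v₁ →
      (1 / 2) * ((-v₁) ⬝ᵥ A.mulVec (-v₁)) + a ⬝ᵥ (-v₁) <
        (1 / 2) * (x ⬝ᵥ A.mulVec x) + a ⬝ᵥ x) := by
  obtain ⟨hμ₀l, hμ₀r⟩ := hμ₀
  have hμ₀0 : 0 < μ₀ := lt_of_le_of_lt (le_max_left _ _) hμ₀l
  have hlam10 : lam1 < 0 := lt_of_lt_of_le hlam1 (min_le_left _ _)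
  have hc : 0 < -(lam1 + μ₀) := by linarith
  have hμstar0 : 0 < μstar := by rw [hμstar]; linarith
  -- a = -(lam1+μ₀) • v₁
  have ha' : a = (-(lam1 + μ₀)) • v₁ := by
    rw [ha, add_mulVec, hv₁, smul_mulVec, one_mulVec]
    ext i; simp [Pi.smul_apply]; ring
  have hadot : ∀ x : Fin n → ℝ, a ⬝ᵥ x = -(lam1 + μ₀) * (v₁ ⬝ᵥ x) := by
    intro x; rw [ha', smul_dotProduct]; simp
  -- v₁ ⬝ A x = lam1 * (v₁ ⬝ x)
  have hsym : ∀ x : Fin n → ℝ, v₁ ⬝ᵥ A.mulVec x = lam1 * (v₁ ⬝ᵥ x) := by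
    intro x
    rw [dotProduct_mulVec, ← Matrix.mulVec_transpose, hA.eq, hv₁, smul_dotProduct]
    simp
  have hAv : ∀ x : Fin n → ℝ, x ⬝ᵥ A.mulVec v₁ = lam1 * (v₁ ⬝ᵥ x) := by
    intro x; rw [hv₁, dotProduct_smul]; simp [dotProduct_comm]
  have hfstar : (1 / 2) * ((-v₁) ⬝ᵥ A.mulVec (-v₁)) + a ⬝ᵥ (-v₁)
      = (1 / 2) * lam1 * δ₁ ^ 2 + (lam1 + μ₀) * δ₁ ^ 2 := by
    rw [hadot, mulVec_neg, dotProduct_neg, neg_dotProduct, hsym, hv₁norm]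
    simp [dotProduct_neg, hv₁norm]; ring
  -- key inequality
  have key : ∀ x : Fin n → ℝ, x ⬝ᵥ x ≤ δ₁ ^ 2 →
      ((1 / 2) * (x ⬝ᵥ A.mulVec x) + a ⬝ᵥ x) - ((1 / 2) * ((-v₁) ⬝ᵥ A.mulVec (-v₁)) + a ⬝ᵥ (-v₁))
        ≥ (-(lam1 + μ₀) / 2) * ((x + v₁) ⬝ᵥ (x + v₁)) := by
    intro x hx
    have hq := hRayleigh x
    have hu : (x + v₁) ⬝ᵥ (x + v₁) = x ⬝ᵥ x + 2 * (v₁ ⬝ᵥ x) + δ₁ ^ 2 := by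
      rw [dotProduct_add, add_dotProduct, add_dotProduct, hv₁norm, dotProduct_comm x v₁]
      ring
    rw [hfstar, hadot, hu]
    have h1 : 0 ≤ μstar * (δ₁ ^ 2 - x ⬝ᵥ x) :=
      mul_nonneg hμstar0.le (by linarith)
    rw [hμstar] at h1
    nlinarith [hq]
  have hdnn : ∀ v : Fin n → ℝ, (0:ℝ) ≤ v ⬝ᵥ v :=
    fun v => Finset.sum_nonneg fun i _ => mul_self_nonneg _
  refine ⟨?_, ?_, ?_, ?_, ?_⟩
  · rw [ha', add_mulVec, mulVec_neg, hv₁, smul_mulVec, one_mulVec, hμstar]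
    ext i; simp [Pi.smul_apply]; ring
  · rw [hμstar]; linarith
  · rw [posDef_iff_dotProduct_mulVec]; constructor
    · rw [Matrix.IsHermitian, conjTranspose_eq_transpose_of_trivial, transpose_add,
        transpose_smul, transpose_one, hA.eq]
    · intro x hx
      have hq := hRayleigh x
      have hxx : 0 < x ⬝ᵥ x := by
        rcases (hdnn x).lt_or_eq with h | h
        · exact h
        · exact absurd ((dotProduct_self_eq_zero).mp h.symm) hx
      have : (star x) ⬝ᵥ (A + μstar • (1 : Matrix (Fin n) (Fin n) ℝ)) *ᵥ x
          = x ⬝ᵥ A.mulVec x + μstar * (x ⬝ᵥ x) := by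
        rw [show (star x : Fin n → ℝ) = x from rfl]
        rw [add_mulVec, smul_mulVec, one_mulVec, dotProduct_add, dotProduct_smul]
        simp
      rw [this, hμstar]
      nlinarith
  · intro x hx
    have := key x hx
    have hnn : 0 ≤ (x + v₁) ⬝ᵥ (x + v₁) := hdnn _
    nlinarith
  · intro x hx hne
    have := key x hx
    have hne' : x + v₁ ≠ 0 := by
      intro h; apply hne; funext i
      have := congrFun h i; simpa [Pi.add_apply, eq_neg_iff_add_eq_zero] using this
    have hpos : 0 < (x + v₁) ⬝ᵥ (x + v₁) := by
      rcases (hdnn (x + v₁)).lt_or_eq with h | h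
      · exact h
      · exact absurd ((dotProduct_self_eq_zero).mp h.symm) hne'
    nlinarith
end

section
/- (Sufficient global optimality for TTRS.) Let A, B ∈ ℝ^{n×n} be symmetric with B positive definite, a, c ∈ ℝⁿ, δ₁, δ₂ > 0. Suppose x* satisfies ‖x*‖² ≤ δ₁², (x*−c)ᵀB(x*−c) ≤ δ₂², and there exist γ*, μ* ≥ 0 with (A + γ* I + μ* B) x* = μ* B c − a, γ*(‖x*‖² − δ₁²) = 0, μ*((x*−c)ᵀB(x*−c) − δ₂²) = 0, and A + γ* I + μ* B positive semidefinite. Then x* is a global minimizer of (1/2)xᵀAx + aᵀx over {x : ‖x‖² ≤ δ₁², (x−c)ᵀB(x−c) ≤ δ₂²}. -/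
/-! The Lagrangian `L x = f x + (γ/2)(‖x‖² - δ₁²) + (μ/2)((x - c)ᵀB(x - c) - δ₂²)` is a quadratic
with Hessian `H = A + γ I + μ B` whose gradient vanishes at `x*` by the KKT equation, so
`L x - L x* = ½ (x - x*)ᵀ H (x - x*) ≥ 0`. Complementary slackness gives `L x* = f x*`, and on the
feasible set the multiplier terms are nonpositive, so `f x ≥ L x ≥ L x* = f x*`. -/

open Matrix

theorem le_of_lagrangian_le {E : Type*} {f g₁ g₂ : E → ℝ} {l₁ l₂ : ℝ} {x₀ : E}
    (hl₁ : 0 ≤ l₁) (hl₂ : 0 ≤ l₂) (hs₁ : l₁ * g₁ x₀ = 0) (hs₂ : l₂ * g₂ x₀ = 0)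
    (hL : ∀ x, f x₀ + l₁ * g₁ x₀ + l₂ * g₂ x₀ ≤ f x + l₁ * g₁ x + l₂ * g₂ x)
    {x : E} (hx₁ : g₁ x ≤ 0) (hx₂ : g₂ x ≤ 0) : f x₀ ≤ f x := by
  linarith [hL x, mul_nonpos_of_nonneg_of_nonpos hl₁ hx₁, mul_nonpos_of_nonneg_of_nonpos hl₂ hx₂]

namespace Matrix

variable {ι : Type*} [Fintype ι]

theorem IsSymm.dotProduct_mulVec_comm {R : Type*} [CommSemiring R] {M : Matrix ι ι R}
    (hM : M.IsSymm) (x y : ι → R) : x ⬝ᵥ M *ᵥ y = y ⬝ᵥ M *ᵥ x := by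
  rw [dotProduct_mulVec, ← mulVec_transpose, hM.eq, dotProduct_comm]

theorem IsSymm.dotProduct_mulVec_sub_sub {R : Type*} [CommRing R] {M : Matrix ι ι R}
    (hM : M.IsSymm) (x y : ι → R) :
    (x - y) ⬝ᵥ M *ᵥ (x - y) = x ⬝ᵥ M *ᵥ x - 2 * (M *ᵥ y ⬝ᵥ x) + y ⬝ᵥ M *ᵥ y := by
  simp only [mulVec_sub, dotProduct_sub, sub_dotProduct, hM.dotProduct_mulVec_comm y x,
    dotProduct_comm x]
  ring

theorem IsSymm.quadratic_sub_eq_of_mulVec_eq_neg {M : Matrix ι ι ℝ} (hM : M.IsSymm)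
    {b x₀ : ι → ℝ} (h : M *ᵥ x₀ = -b) (x : ι → ℝ) :
    (1 / 2 * (x ⬝ᵥ M *ᵥ x) + b ⬝ᵥ x) - (1 / 2 * (x₀ ⬝ᵥ M *ᵥ x₀) + b ⬝ᵥ x₀)
      = 1 / 2 * ((x - x₀) ⬝ᵥ M *ᵥ (x - x₀)) := by
  rw [hM.dotProduct_mulVec_sub_sub, h, neg_dotProduct, dotProduct_neg, dotProduct_comm x₀]
  ring

theorem PosSemidef.quadratic_le_of_mulVec_eq_neg {M : Matrix ι ι ℝ} (hM : M.PosSemidef)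
    {b x₀ : ι → ℝ} (h : M *ᵥ x₀ = -b) (x : ι → ℝ) :
    1 / 2 * (x₀ ⬝ᵥ M *ᵥ x₀) + b ⬝ᵥ x₀ ≤ 1 / 2 * (x ⬝ᵥ M *ᵥ x) + b ⬝ᵥ x := by
  have hdiff := (isHermitian_iff_isSymm.mp hM.isHermitian).quadratic_sub_eq_of_mulVec_eq_neg h x
  have hnonneg : 0 ≤ (x - x₀) ⬝ᵥ M *ᵥ (x - x₀) := by
    simpa only [star_trivial] using hM.dotProduct_mulVec_nonneg (x - x₀)
  linarith

end Matrix

theorem ttrs_lagrangian_eq {ι : Type*} [Fintype ι] [DecidableEq ι] {A B : Matrix ι ι ℝ}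
    (hB : B.IsSymm) (a c x : ι → ℝ) (γ μ δ₁ δ₂ : ℝ) :
    1 / 2 * (x ⬝ᵥ A *ᵥ x) + a ⬝ᵥ x + γ / 2 * (x ⬝ᵥ x - δ₁ ^ 2)
        + μ / 2 * ((x - c) ⬝ᵥ B *ᵥ (x - c) - δ₂ ^ 2)
      = 1 / 2 * (x ⬝ᵥ (A + γ • (1 : Matrix ι ι ℝ) + μ • B) *ᵥ x) + (a - μ • B *ᵥ c) ⬝ᵥ x
        + (μ / 2 * (c ⬝ᵥ B *ᵥ c) - γ / 2 * δ₁ ^ 2 - μ / 2 * δ₂ ^ 2) := by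
  rw [hB.dotProduct_mulVec_sub_sub]
  simp only [add_mulVec, smul_mulVec, one_mulVec, dotProduct_add, dotProduct_smul,
    sub_dotProduct, smul_dotProduct, smul_eq_mul]
  ring

theorem stmt_3_general {n : ℕ}
    (A B : Matrix (Fin n) (Fin n) ℝ) (hB : B.PosDef)
    (a c : Fin n → ℝ) (δ₁ δ₂ : ℝ)
    (xstar : Fin n → ℝ)
    (γ μ : ℝ) (hγ : 0 ≤ γ) (hμ : 0 ≤ μ)
    (hKKT : (A + γ • (1 : Matrix (Fin n) (Fin n) ℝ) + μ • B).mulVec xstar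
        = μ • B.mulVec c - a)
    (hcs1 : γ * (xstar ⬝ᵥ xstar - δ₁ ^ 2) = 0)
    (hcs2 : μ * ((xstar - c) ⬝ᵥ B.mulVec (xstar - c) - δ₂ ^ 2) = 0)
    (hpsd : (A + γ • (1 : Matrix (Fin n) (Fin n) ℝ) + μ • B).PosSemidef) :
    ∀ x : Fin n → ℝ, x ⬝ᵥ x ≤ δ₁ ^ 2 → (x - c) ⬝ᵥ B.mulVec (x - c) ≤ δ₂ ^ 2 →
      (1 / 2) * (xstar ⬝ᵥ A.mulVec xstar) + a ⬝ᵥ xstar ≤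
        (1 / 2) * (x ⬝ᵥ A.mulVec x) + a ⬝ᵥ x := by
  intro x hx₁ hx₂
  have hBsymm : B.IsSymm := isHermitian_iff_isSymm.mp hB.isHermitian
  have hstat := hKKT.trans (neg_sub a (μ • B *ᵥ c)).symm
  refine le_of_lagrangian_le (f := fun y => 1 / 2 * (y ⬝ᵥ A *ᵥ y) + a ⬝ᵥ y)
    (g₁ := fun y => y ⬝ᵥ y - δ₁ ^ 2) (g₂ := fun y => (y - c) ⬝ᵥ B *ᵥ (y - c) - δ₂ ^ 2)
    (l₁ := γ / 2) (l₂ := μ / 2)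
    (by positivity) (by positivity) (by linear_combination hcs1 / 2)
    (by linear_combination hcs2 / 2) (fun y => ?_) (sub_nonpos.mpr hx₁) (sub_nonpos.mpr hx₂)
  rw [ttrs_lagrangian_eq hBsymm, ttrs_lagrangian_eq hBsymm]
  gcongr ?_ + _
  exact hpsd.quadratic_le_of_mulVec_eq_neg hstat y

theorem stmt_3 {n : ℕ}
    (A B : Matrix (Fin n) (Fin n) ℝ) (hA : A.IsSymm) (hB : B.PosDef)
    (a c : Fin n → ℝ) (δ₁ δ₂ : ℝ) (hδ₁ : 0 < δ₁) (hδ₂ : 0 < δ₂)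
    (xstar : Fin n → ℝ)
    (hfeas1 : xstar ⬝ᵥ xstar ≤ δ₁ ^ 2)
    (hfeas2 : (xstar - c) ⬝ᵥ B.mulVec (xstar - c) ≤ δ₂ ^ 2)
    (γ μ : ℝ) (hγ : 0 ≤ γ) (hμ : 0 ≤ μ)
    (hKKT : (A + γ • (1 : Matrix (Fin n) (Fin n) ℝ) + μ • B).mulVec xstar
        = μ • B.mulVec c - a)
    (hcs1 : γ * (xstar ⬝ᵥ xstar - δ₁ ^ 2) = 0)
    (hcs2 : μ * ((xstar - c) ⬝ᵥ B.mulVec (xstar - c) - δ₂ ^ 2) = 0)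
    (hpsd : (A + γ • (1 : Matrix (Fin n) (Fin n) ℝ) + μ • B).PosSemidef) :
    ∀ x : Fin n → ℝ, x ⬝ᵥ x ≤ δ₁ ^ 2 → (x - c) ⬝ᵥ B.mulVec (x - c) ≤ δ₂ ^ 2 →
      (1 / 2) * (xstar ⬝ᵥ A.mulVec xstar) + a ⬝ᵥ xstar ≤
        (1 / 2) * (x ⬝ᵥ A.mulVec x) + a ⬝ᵥ x :=
  stmt_3_general A B hB a c δ₁ δ₂ xstar γ μ hγ hμ hKKT hcs1 hcs2 hpsd
end

section
/- (Positive definiteness of the modified Hessian in the hard case.) Let M ∈ ℝ^{n×n} be symmetric positive semidefinite, B ∈ ℝ^{n×n} symmetric positive definite, and let V = [v₁,...,v_r] ∈ ℝ^{n×r} be a basis of the nullspace N(M) of M satisfying VᵀBV = I_r. Then for any σ > 0, the matrix H = M + σ Σᵢ B vᵢ vᵢᵀ B is positive definite. -/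
/-!
Both summands of `H` are positive semidefinite, so `H` is positive definite as soon as their
kernels meet only in `0`. If `M x = 0` then `x = ∑ cᵢ vᵢ`; if the second summand also kills `x`,
then `xᵀ (∑ B vᵢ vᵢᵀ B) x = ∑ ((B vᵢ)ᵀ x)² = 0`, so every `xᵀ B vⱼ` vanishes, and by
`B`-orthonormality `xᵀ B vⱼ = cⱼ`.
-/

open Matrix

open scoped ComplexOrder in
theorem Matrix.PosSemidef.posDef_add_of_mulVec_eq_zero {n 𝕜 : Type*} [Fintype n] [RCLike 𝕜]
    {A C : Matrix n n 𝕜} (hA : A.PosSemidef) (hC : C.PosSemidef)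
    (h : ∀ x, A *ᵥ x = 0 → C *ᵥ x = 0 → x = 0) : (A + C).PosDef := by
  refine posDef_iff_dotProduct_mulVec.mpr ⟨(hA.add hC).isHermitian, fun x hx => ?_⟩
  have hAx := hA.dotProduct_mulVec_nonneg x
  have hCx := hC.dotProduct_mulVec_nonneg x
  rw [add_mulVec, dotProduct_add]
  refine (add_nonneg hAx hCx).lt_of_ne fun hsum => hx ?_
  obtain ⟨hA0, hC0⟩ := (add_eq_zero_iff_of_nonneg hAx hCx).mp hsum.symm
  exact h x ((hA.dotProduct_mulVec_zero_iff x).mp hA0) ((hC.dotProduct_mulVec_zero_iff x).mp hC0)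

section
variable {ι n R : Type*} [Fintype ι] [Fintype n]

theorem Matrix.posSemidef_sum_vecMulVec_self [CommRing R] [PartialOrder R] [StarRing R]
    [TrivialStar R] [StarOrderedRing R] (u : ι → n → R) :
    (∑ i, vecMulVec (u i) (u i)).PosSemidef :=
  posSemidef_sum _ fun i _ => by simpa using posSemidef_vecMulVec_self_star (u i)

theorem Matrix.dotProduct_sum_vecMulVec_self_mulVec [CommRing R] (u : ι → n → R) (x : n → R) :
    x ⬝ᵥ (∑ i, vecMulVec (u i) (u i)) *ᵥ x = ∑ i, (u i ⬝ᵥ x) ^ 2 := by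
  simp only [sum_mulVec, dotProduct_sum, vecMulVec_mulVec, op_smul_eq_smul, dotProduct_smul,
    smul_eq_mul, sq]
  simp only [dotProduct_comm x]

theorem Matrix.dotProduct_eq_zero_of_sum_vecMulVec_self_mulVec_eq_zero [CommRing R] [LinearOrder R]
    [IsStrictOrderedRing R] {u : ι → n → R} {x : n → R}
    (hx : (∑ i, vecMulVec (u i) (u i)) *ᵥ x = 0) (i : ι) : u i ⬝ᵥ x = 0 := by
  have hsum := dotProduct_sum_vecMulVec_self_mulVec u x
  rw [hx, dotProduct_zero, eq_comm, Finset.sum_eq_zero_iff_of_nonneg fun i _ => sq_nonneg _] at hsum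
  exact pow_eq_zero_iff two_ne_zero |>.mp (hsum i (Finset.mem_univ i))

variable [CommRing R] [DecidableEq ι] {B : Matrix n n R} {V : ι → n → R}

theorem Matrix.sum_smul_dotProduct_mulVec_of_orthonormal
    (hV : ∀ i j, V i ⬝ᵥ B *ᵥ V j = if i = j then 1 else 0) (c : ι → R) (j : ι) :
    (∑ i, c i • V i) ⬝ᵥ B *ᵥ V j = c j := by
  simp [sum_dotProduct, smul_dotProduct, hV]

theorem Matrix.eq_zero_of_mem_span_of_orthonormal
    (hV : ∀ i j, V i ⬝ᵥ B *ᵥ V j = if i = j then 1 else 0) {x : n → R}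
    (hx : x ∈ Submodule.span R (Set.range V)) (hxV : ∀ j, x ⬝ᵥ B *ᵥ V j = 0) : x = 0 := by
  obtain ⟨c, rfl⟩ := (Submodule.mem_span_range_iff_exists_fun R).mp hx
  have hc (j : ι) : c j = 0 := by
    rw [← sum_smul_dotProduct_mulVec_of_orthonormal hV c j, hxV]
  simp [hc]

end

theorem stmt_6_general {n r : ℕ}
    (M B : Matrix (Fin n) (Fin n) ℝ) (hM : M.PosSemidef)
    (V : Fin r → (Fin n → ℝ))
    (hVorth : ∀ i j, V i ⬝ᵥ B.mulVec (V j) = if i = j then (1 : ℝ) else 0)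
    (hVnull : ∀ x : Fin n → ℝ, M.mulVec x = 0 ↔ x ∈ Submodule.span ℝ (Set.range V))
    (σ : ℝ) (hσ : 0 < σ) :
    (M + σ • ∑ i, Matrix.vecMulVec (B.mulVec (V i)) (B.mulVec (V i))).PosDef := by
  refine hM.posDef_add_of_mulVec_eq_zero ((posSemidef_sum_vecMulVec_self _).smul hσ.le)
    fun x hMx hGx => eq_zero_of_mem_span_of_orthonormal hVorth ((hVnull x).mp hMx) fun j => ?_
  rw [smul_mulVec, smul_eq_zero_iff_right hσ.ne'] at hGx
  rw [dotProduct_comm]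
  exact dotProduct_eq_zero_of_sum_vecMulVec_self_mulVec_eq_zero hGx j

theorem stmt_6 {n r : ℕ}
    (M B : Matrix (Fin n) (Fin n) ℝ) (hM : M.PosSemidef) (hB : B.PosDef)
    (V : Fin r → (Fin n → ℝ))
    (hVorth : ∀ i j, V i ⬝ᵥ B.mulVec (V j) = if i = j then (1 : ℝ) else 0)
    (hVnull : ∀ x : Fin n → ℝ, M.mulVec x = 0 ↔ x ∈ Submodule.span ℝ (Set.range V))
    (σ : ℝ) (hσ : 0 < σ) :
    (M + σ • ∑ i, Matrix.vecMulVec (B.mulVec (V i)) (B.mulVec (V i))).PosDef :=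
  stmt_6_general M B hM V hVorth hVnull σ hσ
end

section
/- Let M ∈ ℝ^{n×n} be symmetric positive semidefinite, B symmetric positive definite, V a B-orthonormal basis of N(M), σ > 0, H = M + σ Σᵢ B vᵢ vᵢᵀ B, and b ∈ ℝⁿ a vector in the range of M. Then q := H^{-1} b satisfies M q = b, and among all solutions x of M x = b, q has the smallest B-norm: q = argmin { ‖x‖_B : M x = b }, where ‖x‖_B² = xᵀBx. -/
/-!
Since `M` is symmetric and `M vⱼ = 0`, pairing `H x` with `vⱼ` kills the `M`-part and, by
`B`-orthonormality, leaves `vⱼᵀ H x = σ (B vⱼ)ᵀ x`. For `H x = 0` this makes `x` both a null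
vector of `M` and `B`-orthogonal to `N(M)`, so `x = 0` and `H` is invertible. For `H q = b` with
`b ∈ range M ⊥ N(M)` it gives `(B vⱼ)ᵀ q = 0`, so the shift term vanishes and `M q = H q = b`.
Every solution of `M x = b` is `q + w` with `w ∈ N(M)`, and as `q ⊥_B N(M)`,
`‖q + w‖_B² = ‖q‖_B² + ‖w‖_B² ≥ ‖q‖_B²`.
-/

open Matrix

variable {n ι : Type*} [Fintype n]

theorem mulVec_dotProduct_eq_zero_of_mem_span {R : Type*} [CommRing R] {B : Matrix n n R}
    {V : ι → n → R} {q w : n → R} (hq : ∀ i, B *ᵥ V i ⬝ᵥ q = 0)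
    (hw : w ∈ Submodule.span R (Set.range V)) : B *ᵥ w ⬝ᵥ q = 0 := by
  induction hw using Submodule.span_induction with
  | mem _ hv => obtain ⟨i, rfl⟩ := hv; exact hq i
  | zero => simp
  | add _ _ _ _ h₁ h₂ => simp [mulVec_add, add_dotProduct, h₁, h₂]
  | smul _ _ _ h => simp [mulVec_smul, smul_dotProduct, h]

theorem eq_zero_of_mem_span_of_forall_dotProduct_eq_zero {B : Matrix n n ℝ} (hB : B.PosDef)
    {V : ι → n → ℝ} {x : n → ℝ} (hx : x ∈ Submodule.span ℝ (Set.range V))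
    (hxV : ∀ i, B *ᵥ V i ⬝ᵥ x = 0) : x = 0 := by
  by_contra hne
  have hpos := hB.dotProduct_mulVec_pos hne
  rw [star_trivial, dotProduct_comm, mulVec_dotProduct_eq_zero_of_mem_span hxV hx] at hpos
  exact lt_irrefl 0 hpos

theorem dotProduct_mulVec_self_le_of_orthogonal {B : Matrix n n ℝ} (hB : B.PosSemidef)
    {q w : n → ℝ} (hqw : B *ᵥ w ⬝ᵥ q = 0) : q ⬝ᵥ B *ᵥ q ≤ (q + w) ⬝ᵥ B *ᵥ (q + w) := by
  have hBt : Bᵀ = B := by rw [← conjTranspose_eq_transpose_of_trivial]; exact hB.1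
  have hwq : w ⬝ᵥ B *ᵥ q = 0 := by rw [dotProduct_mulVec, ← mulVec_transpose, hBt, hqw]
  have hw := hB.dotProduct_mulVec_nonneg w
  rw [star_trivial] at hw
  simp only [mulVec_add, dotProduct_add, add_dotProduct, dotProduct_comm q (B *ᵥ w), hqw, hwq]
  linarith

variable [Fintype ι]

def nullspaceShift {R : Type*} [CommRing R] (M B : Matrix n n R) (V : ι → n → R) (σ : R) :
    Matrix n n R :=
  M + σ • ∑ i, vecMulVec (B *ᵥ V i) (B *ᵥ V i)

section Algebra

variable {R : Type*} [CommRing R] (M B : Matrix n n R) (V : ι → n → R) (σ : R)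

theorem nullspaceShift_mulVec (x : n → R) :
    nullspaceShift M B V σ *ᵥ x = M *ᵥ x + σ • ∑ i, (B *ᵥ V i ⬝ᵥ x) • B *ᵥ V i := by
  simp only [nullspaceShift, add_mulVec, smul_mulVec, sum_mulVec, vecMulVec_mulVec,
    op_smul_eq_smul]

theorem nullspaceShift_mulVec_of_forall_dotProduct_eq_zero {x : n → R}
    (hx : ∀ i, B *ᵥ V i ⬝ᵥ x = 0) : nullspaceShift M B V σ *ᵥ x = M *ᵥ x := by
  simp [nullspaceShift_mulVec, hx]

variable {M B V}

theorem dotProduct_nullspaceShift_mulVec [DecidableEq ι] (hVM : ∀ j, V j ᵥ* M = 0)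
    (hV : ∀ i j, V i ⬝ᵥ B *ᵥ V j = if i = j then 1 else 0) (j : ι) (x : n → R) :
    V j ⬝ᵥ nullspaceShift M B V σ *ᵥ x = σ * (B *ᵥ V j ⬝ᵥ x) := by
  simp [nullspaceShift_mulVec, dotProduct_mulVec _ M, hVM, dotProduct_sum, hV]

end Algebra

theorem isUnit_nullspaceShift [DecidableEq n] [DecidableEq ι] {M B : Matrix n n ℝ}
    {V : ι → n → ℝ} (hB : B.PosDef) (hVM : ∀ j, V j ᵥ* M = 0)
    (hV : ∀ i j, V i ⬝ᵥ B *ᵥ V j = if i = j then 1 else 0)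
    (hker : ∀ x, M *ᵥ x = 0 → x ∈ Submodule.span ℝ (Set.range V)) {σ : ℝ} (hσ : σ ≠ 0) :
    IsUnit (nullspaceShift M B V σ) := by
  refine mulVec_injective_iff_isUnit.1 <| (injective_iff_map_eq_zero
    (nullspaceShift M B V σ).mulVecLin).2 fun x (hx : _ *ᵥ x = 0) => ?_
  have hxV : ∀ j, B *ᵥ V j ⬝ᵥ x = 0 := fun j => by
    have h := dotProduct_nullspaceShift_mulVec σ hVM hV j x
    rw [hx, dotProduct_zero] at h
    exact (mul_eq_zero.1 h.symm).resolve_left hσ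
  have hMx : M *ᵥ x = 0 := by
    rw [← nullspaceShift_mulVec_of_forall_dotProduct_eq_zero M B V σ hxV]; exact hx
  exact eq_zero_of_mem_span_of_forall_dotProduct_eq_zero hB (hker x hMx) hxV

theorem stmt_7 {n r : ℕ}
    (M B : Matrix (Fin n) (Fin n) ℝ) (hM : M.PosSemidef) (hB : B.PosDef)
    (V : Fin r → (Fin n → ℝ))
    (hVorth : ∀ i j, V i ⬝ᵥ B.mulVec (V j) = if i = j then (1 : ℝ) else 0)
    (hVnull : ∀ x : Fin n → ℝ, M.mulVec x = 0 ↔ x ∈ Submodule.span ℝ (Set.range V))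
    (σ : ℝ) (hσ : 0 < σ)
    (H : Matrix (Fin n) (Fin n) ℝ)
    (hH : H = M + σ • ∑ i, Matrix.vecMulVec (B.mulVec (V i)) (B.mulVec (V i)))
    (b : Fin n → ℝ) (hb : ∃ y, M.mulVec y = b)
    (q : Fin n → ℝ) (hq : q = H⁻¹.mulVec b) :
    M.mulVec q = b ∧
    ∀ x : Fin n → ℝ, M.mulVec x = b → q ⬝ᵥ B.mulVec q ≤ x ⬝ᵥ B.mulVec x := by
  obtain ⟨y, rfl⟩ := hb
  replace hH : H = nullspaceShift M B V σ := hH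
  subst hH
  have hMt : Mᵀ = M := by rw [← conjTranspose_eq_transpose_of_trivial]; exact hM.1
  have hVM : ∀ j, V j ᵥ* M = 0 := fun j => by
    rw [← mulVec_transpose, hMt, hVnull]; exact Submodule.subset_span ⟨j, rfl⟩
  have hHq : nullspaceShift M B V σ *ᵥ q = M *ᵥ y := by
    rw [hq, mulVec_mulVec, mul_nonsing_inv _ ((isUnit_nullspaceShift hB hVM hVorth
      (fun x => (hVnull x).1) hσ.ne').map detMonoidHom), one_mulVec]
  have hqV : ∀ j, B *ᵥ V j ⬝ᵥ q = 0 := fun j => by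
    have h := dotProduct_nullspaceShift_mulVec σ hVM hVorth j q
    rw [hHq, dotProduct_mulVec, hVM, zero_dotProduct] at h
    exact (mul_eq_zero.1 h.symm).resolve_left hσ.ne'
  have hMq := (nullspaceShift_mulVec_of_forall_dotProduct_eq_zero M B V σ hqV).symm.trans hHq
  refine ⟨hMq, fun x hx => ?_⟩
  have hw : x - q ∈ Submodule.span ℝ (Set.range V) :=
    (hVnull _).1 (by rw [mulVec_sub, hx, hMq, sub_self])
  simpa using dotProduct_mulVec_self_le_of_orthogonal hB.posSemidef
    (mulVec_dotProduct_eq_zero_of_mem_span hqV hw)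
end

section
/- If a ∈ ℝⁿ is orthogonal to some eigenvector of A associated with the smallest eigenvalue λ₁, and λ ∈ (max{0,−λ₂}, −λ₁) with λ₂ the second smallest eigenvalue, then the necessary LNGM conditions cannot hold with a one-dimensional negative eigenspace: concretely, if v is a unit eigenvector of A for λ₁ with vᵀa = 0, then for any λ ∈ (−λ₂, −λ₁) and any x with (A + λI)x = −a, one has vᵀx = 0 and Vᵀ(A + λI)V has a negative eigenvalue for any V whose columns complete x/‖x‖ to an orthonormal basis (in particular v lies in the column space of V), so V ᵀ(A+λI)V ⪰ 0 fails. -/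
open Matrix

theorem stmt_16 {n : ℕ}
    (A : Matrix (Fin n) (Fin n) ℝ) (hA : A.IsSymm)
    (lam1 lam2 : ℝ) (hlt : lam1 < lam2)
    (v : Fin n → ℝ) (hvnorm : v ⬝ᵥ v = 1) (hveig : A.mulVec v = lam1 • v)
    (a : Fin n → ℝ) (hva : v ⬝ᵥ a = 0)
    (t : ℝ) (ht : t ∈ Set.Ioo (-lam2) (-lam1))
    (x : Fin n → ℝ)
    (hx : (A + t • (1 : Matrix (Fin n) (Fin n) ℝ)).mulVec x = -a)
    (V : Fin (n - 1) → (Fin n → ℝ))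
    (hVorth : ∀ i j, V i ⬝ᵥ V j = if i = j then (1 : ℝ) else 0)
    (hVx : ∀ i, V i ⬝ᵥ x = 0)
    (hVcomplete : Submodule.span ℝ (insert x (Set.range V)) = ⊤) :
    v ⬝ᵥ x = 0 ∧
    v ∈ Submodule.span ℝ (Set.range V) ∧
    ∃ y ∈ Submodule.span ℝ (Set.range V),
      y ⬝ᵥ (A + t • (1 : Matrix (Fin n) (Fin n) ℝ)).mulVec y < 0 := by
  have hmul : ∀ y : Fin n → ℝ,
      (A + t • (1 : Matrix (Fin n) (Fin n) ℝ)).mulVec y = A.mulVec y + t • y := by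
    intro y
    rw [Matrix.add_mulVec, Matrix.smul_mulVec, Matrix.one_mulVec]
  have hvA : ∀ y : Fin n → ℝ, v ⬝ᵥ A.mulVec y = lam1 * (v ⬝ᵥ y) := by
    intro y
    rw [Matrix.dotProduct_mulVec]
    have : Matrix.vecMul v A = lam1 • v := by
      rw [← Matrix.mulVec_transpose, hA.eq, hveig]
    rw [this, smul_dotProduct, smul_eq_mul]
  have hquad : ∀ y : Fin n → ℝ,
      v ⬝ᵥ (A + t • (1 : Matrix (Fin n) (Fin n) ℝ)).mulVec y = (lam1 + t) * (v ⬝ᵥ y) := by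
    intro y
    rw [hmul, dotProduct_add, hvA, dotProduct_smul, smul_eq_mul]
    ring
  have hne : lam1 + t ≠ 0 := by
    have := ht.2
    linarith
  have hvx : v ⬝ᵥ x = 0 := by
    have h1 : (lam1 + t) * (v ⬝ᵥ x) = 0 := by
      rw [← hquad, hx, dotProduct_neg, hva, neg_zero]
    exact (mul_eq_zero.mp h1).resolve_left hne
  have hspanx : ∀ z ∈ Submodule.span ℝ (Set.range V), z ⬝ᵥ x = 0 := by
    intro z hz
    induction hz using Submodule.span_induction with
    | mem z hz => obtain ⟨i, rfl⟩ := hz; exact hVx i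
    | zero => simp
    | add z w _ _ hz hw => rw [add_dotProduct, hz, hw, add_zero]
    | smul c z _ hz => rw [smul_dotProduct, hz, smul_zero]
  have hvmem : v ∈ Submodule.span ℝ (Set.range V) := by
    have hv : v ∈ Submodule.span ℝ (insert x (Set.range V)) := by
      rw [hVcomplete]; trivial
    obtain ⟨c, z, hz, rfl⟩ := Submodule.mem_span_insert.mp hv
    have hzx : z ⬝ᵥ x = 0 := hspanx z hz
    have h2 : c * (x ⬝ᵥ x) = 0 := by
      have := hvx
      rw [add_dotProduct, smul_dotProduct, hzx, add_zero, smul_eq_mul] at this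
      exact this
    rcases mul_eq_zero.mp h2 with hc | hxx
    · rw [hc, zero_smul, zero_add]; exact hz
    · have : x = 0 := dotProduct_self_eq_zero.mp hxx
      rw [this, smul_zero, zero_add]; exact hz
  refine ⟨hvx, hvmem, v, hvmem, ?_⟩
  rw [hquad, hvnorm, mul_one]
  have := ht.2
  linarith
end

section
/- (Hard-case parametrization of optimal solutions.) With M = A + μ*B ⪰ 0, B ≻ 0, V a B-orthonormal basis of N(M), q the minimum-B-norm solution of Mx = b, every solution of Mx = b has the form x = q + Vα for some α ∈ ℝ^r, and for such x, (x − c)ᵀB(x − c) = (q − c)ᵀB(q − c) + ‖α‖² + 2αᵀVᵀB(q − c); in particular if VᵀB(q−c) = 0 then the constraint (x−c)ᵀB(x−c) = δ₂² is equivalent to ‖α‖² = δ₂² − (q−c)ᵀB(q−c). -/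
open Matrix

theorem stmt_17 {n r : ℕ}
    (M B : Matrix (Fin n) (Fin n) ℝ) (hM : M.PosSemidef) (hB : B.PosDef)
    (V : Fin r → (Fin n → ℝ))
    (hVorth : ∀ i j, V i ⬝ᵥ B.mulVec (V j) = if i = j then (1 : ℝ) else 0)
    (hVnull : ∀ x : Fin n → ℝ, M.mulVec x = 0 ↔ x ∈ Submodule.span ℝ (Set.range V))
    (b : Fin n → ℝ) (q : Fin n → ℝ) (hq : M.mulVec q = b)
    (c : Fin n → ℝ) (δ₂ : ℝ) :
    (∀ x : Fin n → ℝ, M.mulVec x = b →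
      ∃ α : Fin r → ℝ, x = q + ∑ i, α i • V i) ∧
    (∀ α : Fin r → ℝ,
      ((q + ∑ i, α i • V i) - c) ⬝ᵥ B.mulVec ((q + ∑ i, α i • V i) - c) =
        (q - c) ⬝ᵥ B.mulVec (q - c) + (∑ i, (α i) ^ 2)
          + 2 * ∑ i, α i * (V i ⬝ᵥ B.mulVec (q - c))) ∧
    ((∀ i, V i ⬝ᵥ B.mulVec (q - c) = 0) →
      ∀ α : Fin r → ℝ,
        (((q + ∑ i, α i • V i) - c) ⬝ᵥ B.mulVec ((q + ∑ i, α i • V i) - c) = δ₂ ^ 2 ↔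
          (∑ i, (α i) ^ 2) = δ₂ ^ 2 - (q - c) ⬝ᵥ B.mulVec (q - c))) := by
  have hBt : Bᵀ = B := hB.isHermitian
  have hsym : ∀ x y : Fin n → ℝ, x ⬝ᵥ B.mulVec y = y ⬝ᵥ B.mulVec x := by
    intro x y
    rw [Matrix.dotProduct_mulVec, ← Matrix.mulVec_transpose, hBt, dotProduct_comm]
  have key : ∀ α : Fin r → ℝ,
      ((q + ∑ i, α i • V i) - c) ⬝ᵥ B.mulVec ((q + ∑ i, α i • V i) - c) =
        (q - c) ⬝ᵥ B.mulVec (q - c) + (∑ i, (α i) ^ 2)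
          + 2 * ∑ i, α i * (V i ⬝ᵥ B.mulVec (q - c)) := by
    intro α
    have hstep : (q + ∑ i, α i • V i) - c = (q - c) + ∑ i, α i • V i := by abel
    rw [hstep]
    set w := q - c with hwdef
    set s : Fin n → ℝ := ∑ i, α i • V i with hsdef
    have hBs : ∀ z : Fin n → ℝ, s ⬝ᵥ B.mulVec z = ∑ i, α i * (V i ⬝ᵥ B.mulVec z) := by
      intro z
      rw [hsdef]
      simp only [dotProduct, Finset.sum_apply, Pi.smul_apply, smul_eq_mul,
        Finset.sum_mul, Finset.mul_sum]
      rw [Finset.sum_comm]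
      exact Finset.sum_congr rfl fun i _ => Finset.sum_congr rfl fun j _ => by ring
    have hVs : ∀ i, V i ⬝ᵥ B.mulVec s = α i := by
      intro i
      rw [hsym, hBs]
      simp [hVorth, mul_ite]
    have hss : s ⬝ᵥ B.mulVec s = ∑ i, α i ^ 2 := by
      rw [hBs]
      exact Finset.sum_congr rfl fun i _ => by rw [hVs]; ring
    have hws : w ⬝ᵥ B.mulVec s = ∑ i, α i * (V i ⬝ᵥ B.mulVec w) := by
      rw [hsym, hBs]
    rw [Matrix.mulVec_add, dotProduct_add, add_dotProduct, add_dotProduct,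
      hss, hws, hBs]
    ring
  refine ⟨?_, key, ?_⟩
  · intro x hx
    have h0 : M.mulVec (x - q) = 0 := by
      rw [Matrix.mulVec_sub, hx, hq, sub_self]
    have hmem := (hVnull (x - q)).mp h0
    rw [Finsupp.mem_span_range_iff_exists_finsupp] at hmem
    obtain ⟨cc, hcc⟩ := hmem
    refine ⟨fun i => cc i, ?_⟩
    have : ∑ i, cc i • V i = x - q := by
      rw [← hcc, Finsupp.sum_fintype]
      simp
    rw [this]; abel
  · intro hz α
    rw [key α]
    simp only [hz, mul_zero, Finset.sum_const_zero]
    constructor <;> intro h <;> linarith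
end
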